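/- arXiv:2101.08707 — 2 statements merged into one kernel-verified Lean document; each statement's English description precedes it below -/
import Mathlib

section
/- Let f : X → Y be a co-uniformly continuous map from a metric space X to a metrically convex metric space Y. Then there exist constants K > 0 and C > 0 such that for all x ∈ X and all r > 0, B_Y(f(x), r) ⊆ (f(B_X(x, Cr)))^K, where A^K denotes the union of closed K-balls centered at points of A. -/
/-- A metric space is metrically convex if between any two points there are points
realizing every convex combination of the distance. -/
def MetricallyConvex (Y : Type*) [MetricSpace Y] : Prop :=
  ∀ y₀ y₁ : Y, ∀ lam : ℝ, 0 < lam → lam < 1 →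
    ∃ yl : Y, dist y₀ yl = lam * dist y₀ y₁ ∧ dist y₁ yl = (1 - lam) * dist y₀ y₁

/-!
In a metrically convex space every point of `B(f x, n δ)` is reached from `f x` by `n` steps
of length at most `δ`; co-uniform continuity (with `d = 1`) lifts each step to a step of
length at most `1` in `X`, so `B(f x, n δ) ⊆ f (B(x, n))`. With `n = ⌊r / δ⌋` the remaining
distance to a point of `B(f x, r)` is at most `δ`, whence `K = δ` and `C = 1 / δ`.
-/

open Metric Set

namespace MetricallyConvex

variable {Y : Type*} [MetricSpace Y]

theorem exists_dist_eq_of_le (hconv : MetricallyConvex Y) {y₀ y₁ : Y} {s : ℝ}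
    (hs : 0 ≤ s) (hsD : s ≤ dist y₀ y₁) :
    ∃ z, dist y₀ z = s ∧ dist z y₁ = dist y₀ y₁ - s := by
  rcases hs.eq_or_lt with rfl | hs_pos
  · exact ⟨y₀, dist_self y₀, by ring⟩
  rcases hsD.eq_or_lt with rfl | hsD_lt
  · exact ⟨y₁, rfl, by simp⟩
  have hD : 0 < dist y₀ y₁ := hs_pos.trans hsD_lt
  obtain ⟨z, h₀, h₁⟩ := hconv y₀ y₁ (s / dist y₀ y₁) (div_pos hs_pos hD)
    ((div_lt_one hD).mpr hsD_lt)
  refine ⟨z, by rw [h₀]; field_simp, ?_⟩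
  rw [dist_comm, h₁]
  field_simp

theorem closedBall_add_subset (hconv : MetricallyConvex Y) {s t : ℝ} (hs : 0 ≤ s)
    (ht : 0 ≤ t) (y : Y) : closedBall y (s + t) ⊆ ⋃ z ∈ closedBall y s, closedBall z t := by
  intro w hw
  rw [mem_closedBall, dist_comm] at hw
  simp only [mem_iUnion, mem_closedBall, exists_prop]
  by_cases hws : dist y w ≤ s
  · exact ⟨w, by rwa [dist_comm], by rwa [dist_self]⟩
  obtain ⟨z, hyz, hzw⟩ := hconv.exists_dist_eq_of_le hs (le_of_not_ge hws)
  exact ⟨z, by rw [dist_comm, hyz], by rw [dist_comm, hzw]; linarith⟩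

end MetricallyConvex

theorem MetricallyConvex.closedBall_natCast_mul_subset_image {X Y : Type*} [MetricSpace X]
    [MetricSpace Y] (hconv : MetricallyConvex Y) {f : X → Y} {δ d : ℝ} (hδ : 0 ≤ δ)
    (h : ∀ x, closedBall (f x) δ ⊆ f '' closedBall x d) (n : ℕ) (x : X) :
    closedBall (f x) (n * δ) ⊆ f '' closedBall x (n * d) := by
  induction n generalizing x with
  | zero => simp
  | succ n ih =>
    intro y hy
    rw [Nat.cast_succ, add_mul, one_mul, add_comm] at hy
    obtain ⟨z, hz, hyz⟩ := mem_iUnion₂.mp (hconv.closedBall_add_subset hδ (by positivity) (f x) hy)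
    obtain ⟨x', hx', rfl⟩ := h x hz
    refine image_mono (closedBall_subset_closedBall' ?_) (ih x' hyz)
    rw [mem_closedBall] at hx'
    push_cast
    linarith

theorem coUniformlyContinuous_coLipschitz_with_error
    {X Y : Type*} [MetricSpace X] [MetricSpace Y] (f : X → Y)
    (hconv : MetricallyConvex Y)
    (hf : ∀ d : ℝ, 0 < d → ∃ δ : ℝ, 0 < δ ∧ ∀ x : X,
      Metric.closedBall (f x) δ ⊆ f '' Metric.closedBall x d) :
    ∃ K C : ℝ, 0 < K ∧ 0 < C ∧ ∀ x : X, ∀ r : ℝ, 0 < r →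
      Metric.closedBall (f x) r ⊆
        ⋃ a ∈ f '' Metric.closedBall x (C * r), Metric.closedBall a K := by
  obtain ⟨δ, hδ, h⟩ := hf 1 one_pos
  refine ⟨δ, 1 / δ, hδ, by positivity, fun x r hr => ?_⟩
  set n := ⌊r / δ⌋₊
  have hr_le : r ≤ n * δ + δ := by
    have := Nat.lt_floor_add_one (r / δ)
    rw [div_lt_iff₀ hδ] at this
    linarith
  have hn_le : (n : ℝ) * 1 ≤ 1 / δ * r := by
    rw [mul_one, one_div_mul_eq_div]
    exact Nat.floor_le (by positivity)
  calc closedBall (f x) r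
      ⊆ closedBall (f x) (n * δ + δ) := closedBall_subset_closedBall hr_le
    _ ⊆ ⋃ a ∈ closedBall (f x) (n * δ), closedBall a δ :=
        hconv.closedBall_add_subset (by positivity) hδ.le (f x)
    _ ⊆ ⋃ a ∈ f '' closedBall x (1 / δ * r), closedBall a δ :=
        biUnion_subset_biUnion_left <|
          (hconv.closedBall_natCast_mul_subset_image hδ.le h n x).trans
            (image_mono (closedBall_subset_closedBall hn_le))
end

section
/- Let f : X → Y be a co-coarsely continuous map from a metric space X to a metrically convex metric space Y. Then there exist constants K > 0 and C > 0 such that for all x ∈ X and all r > 0, B_Y(f(x), r) ⊆ (f(B_X(x, Cr)))^K. -/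
theorem coCoarselyContinuous_coLipschitz_with_error
    {X Y : Type*} [MetricSpace X] [MetricSpace Y] (f : X → Y)
    (hconv : MetricallyConvex Y)
    (hf : ∃ K₀ : ℝ, 0 ≤ K₀ ∧ ∀ d : ℝ, K₀ < d → ∃ δ : ℝ, 0 < δ ∧ ∀ x : X,
      Metric.closedBall (f x) d ⊆
        ⋃ a ∈ f '' Metric.closedBall x δ, Metric.closedBall a K₀) :
    ∃ K C : ℝ, 0 < K ∧ 0 < C ∧ ∀ x : X, ∀ r : ℝ, 0 < r →
      Metric.closedBall (f x) r ⊆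
        ⋃ a ∈ f '' Metric.closedBall x (C * r), Metric.closedBall a K := by
  obtain ⟨K₀, hK₀, hf⟩ := hf
  obtain ⟨δ, hδ, hball⟩ := hf (K₀ + 1) (by linarith)
  -- key induction: stepping n times reaches anything within distance K₀ + 1 + n
  have aux : ∀ n : ℕ, ∀ x : X, ∀ r : ℝ, r ≤ K₀ + 1 + n →
      Metric.closedBall (f x) r ⊆
        ⋃ a ∈ f '' Metric.closedBall x (n * δ), Metric.closedBall a (K₀ + 1) := by
    intro n
    induction n with
    | zero =>
      intro x r hr y hy
      refine Set.mem_biUnion ⟨x, ?_, rfl⟩ ?_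
      · simp [Metric.mem_closedBall, le_of_lt hδ]
      · rw [Metric.mem_closedBall] at hy ⊢
        push_cast at hr
        linarith
    | succ n ih =>
      intro x r hr y hy
      rw [Metric.mem_closedBall] at hy
      by_cases hcase : dist y (f x) ≤ K₀ + 1
      · refine Set.mem_biUnion ⟨x, ?_, rfl⟩ hcase
        have h0 : (0:ℝ) ≤ ((n:ℝ)+1) * δ := by positivity
        simp only [Metric.mem_closedBall, dist_self]
        push_cast
        linarith
      · push_neg at hcase
        set D := dist y (f x) with hD
        have hDpos : (0:ℝ) < D := by linarith
        have hdxy : dist (f x) y = D := by rw [dist_comm]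
        have hlam0 : 0 < (K₀ + 1) / D := by positivity
        have hlam1 : (K₀ + 1) / D < 1 := (div_lt_one hDpos).mpr hcase
        obtain ⟨y', hy'1, hy'2⟩ := hconv (f x) y ((K₀ + 1) / D) hlam0 hlam1
        rw [hdxy] at hy'1 hy'2
        have hy'1' : dist (f x) y' = K₀ + 1 := by
          rw [hy'1, div_mul_cancel₀ _ (ne_of_gt hDpos)]
        have hy'2' : dist y y' = D - (K₀ + 1) := by
          rw [hy'2]; field_simp
        have hmem : y' ∈ Metric.closedBall (f x) (K₀ + 1) := by
          rw [Metric.mem_closedBall, dist_comm]; exact le_of_eq hy'1'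
        have := hball x hmem
        simp only [Set.mem_iUnion, Set.mem_image, Metric.mem_closedBall,
          exists_prop] at this
        obtain ⟨a, ⟨x₁, hx₁, rfl⟩, hy'a⟩ := this
        -- dist y (f x₁) ≤ D - 1
        have hstep : dist y (f x₁) ≤ D - 1 := by
          calc dist y (f x₁) ≤ dist y y' + dist y' (f x₁) := dist_triangle _ _ _
            _ ≤ (D - (K₀ + 1)) + K₀ := by rw [hy'2']; linarith
            _ = D - 1 := by ring
        have hrange : D - 1 ≤ K₀ + 1 + n := by
          push_cast at hr; linarith
        have hy₁ : y ∈ Metric.closedBall (f x₁) (D - 1) := by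
          rw [Metric.mem_closedBall]; exact hstep
        have := ih x₁ (D - 1) hrange hy₁
        simp only [Set.mem_iUnion, Set.mem_image, Metric.mem_closedBall,
          exists_prop] at this
        obtain ⟨a, ⟨x₂, hx₂, rfl⟩, hy₂⟩ := this
        refine Set.mem_biUnion ⟨x₂, ?_, rfl⟩ hy₂
        rw [Metric.mem_closedBall]
        calc dist x₂ x ≤ dist x₂ x₁ + dist x₁ x := dist_triangle _ _ _
          _ ≤ n * δ + δ := add_le_add hx₂ hx₁
          _ = ((n:ℕ)+1 : ℕ) * δ := by push_cast; ring
  refine ⟨K₀ + 1, 2 * δ, by linarith, by linarith, ?_⟩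
  intro x r hr y hy
  rw [Metric.mem_closedBall] at hy
  by_cases h : r ≤ K₀ + 1
  · refine Set.mem_biUnion ⟨x, ?_, rfl⟩ ?_
    · rw [Metric.mem_closedBall, dist_self]; positivity
    · rw [Metric.mem_closedBall]; linarith
  · push_neg at h
    have hr1 : (1:ℝ) ≤ r := by linarith
    have h1 : r ≤ K₀ + 1 + (⌈r⌉₊ : ℝ) := by
      have := Nat.le_ceil r
      linarith
    have := aux ⌈r⌉₊ x r h1 (Metric.mem_closedBall.mpr hy)
    simp only [Set.mem_iUnion, Set.mem_image, Metric.mem_closedBall,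
      exists_prop] at this
    obtain ⟨a, ⟨x₂, hx₂, rfl⟩, hy₂⟩ := this
    refine Set.mem_biUnion ⟨x₂, ?_, rfl⟩ hy₂
    rw [Metric.mem_closedBall]
    have hceil : (⌈r⌉₊ : ℝ) < r + 1 := Nat.ceil_lt_add_one (by linarith)
    have : (⌈r⌉₊ : ℝ) * δ ≤ 2 * δ * r := by nlinarith
    linarith
end
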